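/- arXiv:1503.06492 — 2 statements merged into one kernel-verified Lean document; each statement's English description precedes it below -/
import Mathlib

section
/- For all integers i < j ≤ n: (i) the random vectors x_{1i} − x̄_{1(1)(i+j)} and x_{1j} − x̄_{1(2)(i+j)} are independent; (ii) the random vectors x_{2i} − x̄_{2(1)(i+j)} and x_{2j} − x̄_{2(2)(i+j)} are independent; (iii) E(Δ̂_{ij}) = Δ·(n₍₁₎−1)(n₍₂₎−1)/(n₍₁₎n₍₂₎); consequently the ECDM estimator is exactly unbiased: E(T̂_n) = Δ. -/
open MeasureTheory ProbabilityTheory Filter Matrix Finset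

noncomputable section

/-- The ECDM data model: `x_j = Γ w_j + μ`, `j = 1,…,n`, where the `w_j` are i.i.d. with
mean `0`, covariance `I_q` and finite fourth moments.  The `p = p₁ + p₂` coordinates are
partitioned into the first `p₁` rows (`Γ₁`, `μ₁`) and the last `p₂` rows (`Γ₂`, `μ₂`). -/
structure ECDMModel (Ω : Type) [MeasurableSpace Ω] where
  P : Measure Ω
  isProb : IsProbabilityMeasure P
  p₁ : ℕ
  p₂ : ℕ
  q : ℕ
  n : ℕ
  hp₁ : 1 ≤ p₁
  hp₂ : 1 ≤ p₂
  hn : 4 ≤ n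
  Γ₁ : Matrix (Fin p₁) (Fin q) ℝ
  Γ₂ : Matrix (Fin p₂) (Fin q) ℝ
  μ₁ : Fin p₁ → ℝ
  μ₂ : Fin p₂ → ℝ
  w : ℕ → Ω → Fin q → ℝ
  w_meas : ∀ j, Measurable (w j)
  w_indep : iIndepFun (m := fun _ : ℕ => MeasurableSpace.pi) w P
  w_ident : ∀ j j', IdentDistrib (w j) (w j') P P
  w_mean : ∀ j r, ∫ ω, w j ω r ∂P = 0
  w_cov : ∀ j r s, ∫ ω, w j ω r * w j ω s ∂P = if r = s then 1 else 0
  w_mom4 : ∀ j r, Integrable (fun ω => (w j ω r) ^ 4) P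

namespace ECDMModel

variable {Ω : Type} [MeasurableSpace Ω]

/-- The first block `x_{1j} = Γ₁ w_j + μ₁` of the `j`-th observation. -/
def x1 (M : ECDMModel Ω) (j : ℕ) (ω : Ω) : Fin M.p₁ → ℝ :=
  fun a => M.Γ₁.mulVec (M.w j ω) a + M.μ₁ a

/-- The second block `x_{2j} = Γ₂ w_j + μ₂` of the `j`-th observation. -/
def x2 (M : ECDMModel Ω) (j : ℕ) (ω : Ω) : Fin M.p₂ → ℝ :=
  fun a => M.Γ₂.mulVec (M.w j ω) a + M.μ₂ a

/-- `n₍₁₎ = ⌈n/2⌉`. -/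
def n1 (M : ECDMModel Ω) : ℕ := (M.n + 1) / 2

/-- `n₍₂₎ = n − n₍₁₎`. -/
def n2 (M : ECDMModel Ω) : ℕ := M.n - M.n1

/-- `n₍ᵢ₎` for `i = 1, 2`. -/
def nsub (M : ECDMModel Ω) (i : ℕ) : ℕ := if i = 1 then M.n1 else M.n2

/-- The ECDM index set `V_{n(1)(k)}`. -/
def V1 (M : ECDMModel Ω) (k : ℕ) : Finset ℕ :=
  if M.n1 ≤ k / 2 then Finset.Icc (k / 2 - M.n1 + 1) (k / 2)
  else Finset.Icc 1 (k / 2) ∪ Finset.Icc (k / 2 + M.n2 + 1) M.n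

/-- The ECDM index set `V_{n(2)(k)}`. -/
def V2 (M : ECDMModel Ω) (k : ℕ) : Finset ℕ :=
  if k / 2 ≤ M.n1 then Finset.Icc (k / 2 + 1) (k / 2 + M.n2)
  else Finset.Icc 1 (k / 2 - M.n1) ∪ Finset.Icc (k / 2 + 1) M.n

/-- The ECDM index set `V_{n(i)(k)}` for `i = 1, 2`. -/
def Vset (M : ECDMModel Ω) (i k : ℕ) : Finset ℕ := if i = 1 then M.V1 k else M.V2 k

/-- `x̄_{1(i)(k)} = n₍ᵢ₎⁻¹ Σ_{j ∈ V_{n(i)(k)}} x_{1j}`. -/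
def xbar1 (M : ECDMModel Ω) (i k : ℕ) (ω : Ω) : Fin M.p₁ → ℝ :=
  fun a => (∑ j ∈ M.Vset i k, M.x1 j ω a) / (M.nsub i : ℝ)

/-- `x̄_{2(i)(k)} = n₍ᵢ₎⁻¹ Σ_{j ∈ V_{n(i)(k)}} x_{2j}`. -/
def xbar2 (M : ECDMModel Ω) (i k : ℕ) (ω : Ω) : Fin M.p₂ → ℝ :=
  fun a => (∑ j ∈ M.Vset i k, M.x2 j ω a) / (M.nsub i : ℝ)

/-- `Δ̂_{ij} = (x_{1i}−x̄_{1(1)(i+j)})ᵀ(x_{1j}−x̄_{1(2)(i+j)}) ·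
(x_{2i}−x̄_{2(1)(i+j)})ᵀ(x_{2j}−x̄_{2(2)(i+j)})`. -/
def Dhat (M : ECDMModel Ω) (i j : ℕ) (ω : Ω) : ℝ :=
  (∑ a, (M.x1 i ω a - M.xbar1 1 (i + j) ω a) * (M.x1 j ω a - M.xbar1 2 (i + j) ω a)) *
  (∑ a, (M.x2 i ω a - M.xbar2 1 (i + j) ω a) * (M.x2 j ω a - M.xbar2 2 (i + j) ω a))

/-- `u_n = n₍₁₎n₍₂₎/((n₍₁₎−1)(n₍₂₎−1))`. -/
def u (M : ECDMModel Ω) : ℝ :=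
  ((M.n1 : ℝ) * (M.n2 : ℝ)) / (((M.n1 : ℝ) - 1) * ((M.n2 : ℝ) - 1))

/-- The ECDM estimator `T̂_n = (2u_n/(n(n−1))) Σ_{i<j} Δ̂_{ij}`. -/
def That (M : ECDMModel Ω) (ω : Ω) : ℝ :=
  2 * M.u / ((M.n : ℝ) * ((M.n : ℝ) - 1)) *
    ∑ j ∈ Finset.Icc 1 M.n, ∑ i ∈ Finset.Ico 1 j, M.Dhat i j ω

/-- `W_{1n}`, the ECDM estimator of `tr(Σ₁²)`. -/
def W1 (M : ECDMModel Ω) (ω : Ω) : ℝ :=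
  2 * M.u / ((M.n : ℝ) * ((M.n : ℝ) - 1)) *
    ∑ s ∈ Finset.Icc 1 M.n, ∑ r ∈ Finset.Ico 1 s,
      (∑ a, (M.x1 r ω a - M.xbar1 1 (r + s) ω a) * (M.x1 s ω a - M.xbar1 2 (r + s) ω a)) ^ 2

/-- `W_{2n}`, the ECDM estimator of `tr(Σ₂²)`. -/
def W2 (M : ECDMModel Ω) (ω : Ω) : ℝ :=
  2 * M.u / ((M.n : ℝ) * ((M.n : ℝ) - 1)) *
    ∑ s ∈ Finset.Icc 1 M.n, ∑ r ∈ Finset.Ico 1 s,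
      (∑ a, (M.x2 r ω a - M.xbar2 1 (r + s) ω a) * (M.x2 s ω a - M.xbar2 2 (r + s) ω a)) ^ 2

/-- `Σ₁ = Γ₁ Γ₁ᵀ`. -/
def Sig1 (M : ECDMModel Ω) : Matrix (Fin M.p₁) (Fin M.p₁) ℝ := M.Γ₁ * M.Γ₁ᵀ

/-- `Σ₂ = Γ₂ Γ₂ᵀ`. -/
def Sig2 (M : ECDMModel Ω) : Matrix (Fin M.p₂) (Fin M.p₂) ℝ := M.Γ₂ * M.Γ₂ᵀ

/-- `Σ* = Γ₁ Γ₂ᵀ`. -/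
def Sigs (M : ECDMModel Ω) : Matrix (Fin M.p₁) (Fin M.p₂) ℝ := M.Γ₁ * M.Γ₂ᵀ

/-- `Δ = tr(Σ* Σ*ᵀ)`. -/
def Delta (M : ECDMModel Ω) : ℝ := Matrix.trace (M.Sigs * M.Sigsᵀ)

/-- `Ψ = tr(Σ₁²) tr(Σ₂²)`. -/
def Psi (M : ECDMModel Ω) : ℝ := Matrix.trace (M.Sig1 ^ 2) * Matrix.trace (M.Sig2 ^ 2)

/-- `Υ = tr(Σ₁ Σ* Σ₂ Σ*ᵀ)`. -/
def Upsilon (M : ECDMModel Ω) : ℝ := Matrix.trace (M.Sig1 * M.Sigs * M.Sig2 * M.Sigsᵀ)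

/-- `Ω = tr(Σ₁⁴) tr(Σ₂⁴)`. -/
def Omeg (M : ECDMModel Ω) : ℝ := Matrix.trace (M.Sig1 ^ 4) * Matrix.trace (M.Sig2 ^ 4)

/-- `M_r = Var(w_{rj}²)`. -/
def Mom (M : ECDMModel Ω) (r : Fin M.q) : ℝ := variance (fun ω => (M.w 1 ω r) ^ 2) M.P

/-- `δ = √(2 tr(Σ₁²) tr(Σ₂²))/n`. -/
def delta (M : ECDMModel Ω) : ℝ := Real.sqrt (2 * M.Psi) / (M.n : ℝ)

/-- `δ̂ = √(2 W_{1n} W_{2n})/n`. -/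
def deltahat (M : ECDMModel Ω) (ω : Ω) : ℝ := Real.sqrt (2 * M.W1 ω * M.W2 ω) / (M.n : ℝ)

/-- The leading variance term
`K² = (4/n)[Υ + tr((Σ*Σ*ᵀ)²) + Σ_j (M_j−2)(γ_{1j}ᵀ Σ* γ_{2j})²] + (2/n²)[Ψ + Δ²]`. -/
def K2 (M : ECDMModel Ω) : ℝ :=
  4 / (M.n : ℝ) *
    (M.Upsilon + Matrix.trace ((M.Sigs * M.Sigsᵀ) ^ 2) +
      ∑ j, (M.Mom j - 2) * (∑ a, ∑ b, M.Γ₁ a j * M.Sigs a b * M.Γ₂ b j) ^ 2) +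
  2 / (M.n : ℝ) ^ 2 * (M.Psi + M.Delta ^ 2)

/-- Assumption (A-i). -/
def Ai (M : ECDMModel Ω) : Prop :=
  (∀ j, ∀ r s : Fin M.q, r ≠ s →
    ∫ ω, (M.w j ω r) ^ 2 * (M.w j ω s) ^ 2 ∂M.P = 1) ∧
  (∀ j, ∀ r s t v : Fin M.q, r ≠ s → r ≠ t → r ≠ v →
    ∫ ω, M.w j ω r * M.w j ω s * M.w j ω t * M.w j ω v ∂M.P = 0)

/-- Assumption (A-ii). -/
def Aii (M : ECDMModel Ω) : Prop :=
  ∀ j (v : ℕ), v ≤ 8 → ∀ r : Fin v → Fin M.q, Function.Injective r →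
    ∀ α : Fin v → ℕ, (∀ i, 1 ≤ α i ∧ α i ≤ 4) → (∑ i, α i) ≤ 8 →
      ∫ ω, ∏ i, (M.w j ω (r i)) ^ (α i) ∂M.P = ∏ i, ∫ ω, (M.w j ω (r i)) ^ (α i) ∂M.P

end ECDMModel

/-- Assumption (A-iii) along a sequence of models. -/
def Aiii {Ω : ℕ → Type} [∀ k, MeasurableSpace (Ω k)] (M : ∀ k, ECDMModel (Ω k)) : Prop :=
  Tendsto (fun k =>
      min (Matrix.trace ((M k).Sig1 ^ 4) / Matrix.trace ((M k).Sig1 ^ 2) ^ 2)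
          (Matrix.trace ((M k).Sig2 ^ 4) / Matrix.trace ((M k).Sig2 ^ 2) ^ 2))
    atTop (nhds 0)

/-- Assumption (A-iv) along a sequence of models (in particular `Δ > 0`). -/
def Aiv {Ω : ℕ → Type} [∀ k, MeasurableSpace (Ω k)] (M : ∀ k, ECDMModel (Ω k)) : Prop :=
  (∀ k, 0 < (M k).Delta) ∧
    Tendsto (fun k => (M k).Psi / (((M k).n : ℝ) ^ 2 * (M k).Delta ^ 2)) atTop (nhds 0)

/-- Assumption (A-v) along a sequence of models. -/
def Av {Ω : ℕ → Type} [∀ k, MeasurableSpace (Ω k)] (M : ∀ k, ECDMModel (Ω k)) : Prop :=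
  ∃ C : ℝ, ∀ k, ((M k).n : ℝ) ^ 2 * (M k).Delta ^ 2 / (M k).Psi ≤ C

/-- The asymptotic framework: `m = min(p, n) → ∞` and `limsup_k sup_r M_r < ∞`
(stated as boundedness), together with positivity of `tr(Σᵢ²)`. -/
def Framework {Ω : ℕ → Type} [∀ k, MeasurableSpace (Ω k)] (M : ∀ k, ECDMModel (Ω k)) : Prop :=
  Tendsto (fun k => min ((M k).p₁ + (M k).p₂) ((M k).n)) atTop atTop ∧
  (∃ C : ℝ, ∀ k r, (M k).Mom r ≤ C) ∧
  (∀ k, 0 < Matrix.trace ((M k).Sig1 ^ 2) ∧ 0 < Matrix.trace ((M k).Sig2 ^ 2))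

namespace ECDMModel

variable {Ω : Type} [MeasurableSpace Ω]

/-- `Δ̂_{ij,0}` for a candidate matrix `Σ₀`. -/
def Dhat0 (M : ECDMModel Ω) (S0 : Matrix (Fin M.p₁) (Fin M.p₂) ℝ) (i j : ℕ) (ω : Ω) : ℝ :=
  M.u * M.Dhat i j ω -
    (M.n1 : ℝ) / ((M.n1 : ℝ) - 1) *
      ∑ a, ∑ b, (M.x1 i ω a - M.xbar1 1 (i + j) ω a) * S0 a b *
        (M.x2 i ω b - M.xbar2 1 (i + j) ω b) -
    (M.n2 : ℝ) / ((M.n2 : ℝ) - 1) *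
      ∑ a, ∑ b, (M.x1 j ω a - M.xbar1 2 (i + j) ω a) * S0 a b *
        (M.x2 j ω b - M.xbar2 2 (i + j) ω b)

/-- The covariance-structure test statistic
`T̂_{n,0} = (2/(n(n−1))) Σ_{i<j} Δ̂_{ij,0} + ‖Σ₀‖_F²`. -/
def That0 (M : ECDMModel Ω) (S0 : Matrix (Fin M.p₁) (Fin M.p₂) ℝ) (ω : Ω) : ℝ :=
  2 / ((M.n : ℝ) * ((M.n : ℝ) - 1)) *
      ∑ j ∈ Finset.Icc 1 M.n, ∑ i ∈ Finset.Ico 1 j, M.Dhat0 S0 i j ω +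
    Matrix.trace (S0 * S0ᵀ)

/-- `Δ₀ = ‖Σ* − Σ₀‖_F²`. -/
def Delta0 (M : ECDMModel Ω) (S0 : Matrix (Fin M.p₁) (Fin M.p₂) ℝ) : ℝ :=
  Matrix.trace ((M.Sigs - S0) * (M.Sigs - S0)ᵀ)

/-- `ω_{ij} = Σ_{r≠s} Σ_{t≠u} (γ_{1r}ᵀγ_{1t})(γ_{2s}ᵀγ_{2u}) w_{ri} w_{si} w_{tj} w_{uj}`. -/
def omegaT (M : ECDMModel Ω) (i j : ℕ) (ω : Ω) : ℝ :=
  ∑ r, ∑ s, ∑ t, ∑ v,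
    if r ≠ s ∧ t ≠ v then
      (∑ a, M.Γ₁ a r * M.Γ₁ a t) * (∑ b, M.Γ₂ b s * M.Γ₂ b v) *
        (M.w i ω r * M.w i ω s * M.w j ω t * M.w j ω v)
    else 0

/-- `V_n = (2/(n(n−1))) Σ_{i<j} ω_{ij}`. -/
def Vn (M : ECDMModel Ω) (ω : Ω) : ℝ :=
  2 / ((M.n : ℝ) * ((M.n : ℝ) - 1)) *
    ∑ j ∈ Finset.Icc 1 M.n, ∑ i ∈ Finset.Ico 1 j, M.omegaT i j ω

end ECDMModel

/-! For `i < j` the blocks `V_{n(1)(i+j)} ∋ i` and `V_{n(2)(i+j)} ∋ j` are disjoint, and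
`x_{·i} − x̄_{·(1)(i+j)}`, `x_{·j} − x̄_{·(2)(i+j)}` are the images under `Γ₁`, `Γ₂` of the
deviations of `w_i`, `w_j` from the means of the `w_l` over these blocks: they are functions of
disjoint sets of the independent `w_l`, hence independent. A deviation from a mean over `N`
indices has second-moment matrix `(1 − 1/N) I_q`, so by independence
`E Δ̂_{ij} = Σ_{a,b} (1 − 1/n₍₁₎) Σ*_{ab} · (1 − 1/n₍₂₎) Σ*_{ab}`, the same for all
`n(n−1)/2` pairs, and the factor `u_n` removes the bias. -/

section SecondMoments

variable {Ω ι κ : Type*} [MeasurableSpace Ω] {μ : Measure Ω}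

lemma integral_sum_mul_sum_of_memLp {s : Finset ι} {t : Finset κ} {f : ι → Ω → ℝ}
    {g : κ → Ω → ℝ} (hf : ∀ i ∈ s, MemLp (f i) 2 μ) (hg : ∀ j ∈ t, MemLp (g j) 2 μ) :
    ∫ ω, (∑ i ∈ s, f i ω) * (∑ j ∈ t, g j ω) ∂μ = ∑ i ∈ s, ∑ j ∈ t, ∫ ω, f i ω * g j ω ∂μ := by
  have hfg : ∀ i ∈ s, ∀ j ∈ t, Integrable (fun ω => f i ω * g j ω) μ :=
    fun i hi j hj => (hf i hi).integrable_mul (hg j hj)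
  simp_rw [Finset.sum_mul_sum]
  rw [integral_finsetSum _ fun i hi => integrable_finsetSum _ (hfg i hi)]
  exact Finset.sum_congr rfl fun i hi => integral_finsetSum _ (hfg i hi)

variable [Fintype ι] {X Y : Ω → ι → ℝ}

lemma memLp_mulVec_apply {m : Type*} (hX : ∀ r, MemLp (fun ω => X ω r) 2 μ)
    (A : Matrix m ι ℝ) (a : m) : MemLp (fun ω => (A *ᵥ X ω) a) 2 μ :=
  memLp_finsetSum _ fun r _ => (hX r).const_mul (A a r)

lemma integral_mulVec_mul_mulVec [DecidableEq ι] {m m' : Type*} {α : ℝ}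
    (hX : ∀ r, MemLp (fun ω => X ω r) 2 μ)
    (hcov : ∀ r s, ∫ ω, X ω r * X ω s ∂μ = if r = s then α else 0)
    (A : Matrix m ι ℝ) (B : Matrix m' ι ℝ) (a : m) (b : m') :
    ∫ ω, (A *ᵥ X ω) a * (B *ᵥ X ω) b ∂μ = α * (A * Bᵀ) a b := by
  simp only [Matrix.mulVec, dotProduct]
  rw [integral_sum_mul_sum_of_memLp (fun r _ => (hX r).const_mul _)
    (fun s _ => (hX s).const_mul _)]
  have hterm : ∀ r s, ∫ ω, A a r * X ω r * (B b s * X ω s) ∂μ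
      = A a r * B b s * if r = s then α else 0 := fun r s => by
    rw [← hcov, ← integral_const_mul]
    exact integral_congr_ae (ae_of_all _ fun ω => by ring)
  simp_rw [hterm, mul_ite, mul_zero, Finset.sum_ite_eq, Finset.mem_univ, if_true,
    Matrix.mul_apply, Matrix.transpose_apply, Finset.mul_sum]
  exact Finset.sum_congr rfl fun r _ => by ring

lemma dotProduct_mul_dotProduct {m m' : Type*} [Fintype m] [Fintype m'] (u v : m → ℝ)
    (u' v' : m' → ℝ) : (u ⬝ᵥ v) * (u' ⬝ᵥ v') = ∑ a, ∑ b, (u a * u' b) * (v a * v' b) := by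
  simp only [dotProduct, Finset.sum_mul_sum]
  exact Finset.sum_congr rfl fun a _ => Finset.sum_congr rfl fun b _ => by ring

lemma measurable_mulVec_apply_mul_mulVec_apply {m m' : Type*} (A : Matrix m ι ℝ)
    (B : Matrix m' ι ℝ) (a : m) (b : m') :
    Measurable fun v : ι → ℝ => (A *ᵥ v) a * (B *ᵥ v) b := by
  fun_prop

section Independent

variable {m m' : Type*} (A : Matrix m ι ℝ) (B : Matrix m' ι ℝ)

lemma integrable_mulVec_mul_mulVec_mul_of_indepFun (hXY : IndepFun X Y μ)
    (hX : ∀ r, MemLp (fun ω => X ω r) 2 μ) (hY : ∀ r, MemLp (fun ω => Y ω r) 2 μ)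
    (a : m) (b : m') :
    Integrable (fun ω => (A *ᵥ X ω) a * (B *ᵥ X ω) b * ((A *ᵥ Y ω) a * (B *ᵥ Y ω) b)) μ :=
  (hXY.comp (measurable_mulVec_apply_mul_mulVec_apply A B a b)
    (measurable_mulVec_apply_mul_mulVec_apply A B a b)).integrable_mul
    ((memLp_mulVec_apply hX A a).integrable_mul (memLp_mulVec_apply hX B b))
    ((memLp_mulVec_apply hY A a).integrable_mul (memLp_mulVec_apply hY B b))

lemma integrable_dotProduct_mul_dotProduct_of_indepFun [Fintype m] [Fintype m']
    (hXY : IndepFun X Y μ) (hX : ∀ r, MemLp (fun ω => X ω r) 2 μ)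
    (hY : ∀ r, MemLp (fun ω => Y ω r) 2 μ) :
    Integrable (fun ω => ((A *ᵥ X ω) ⬝ᵥ (A *ᵥ Y ω)) * ((B *ᵥ X ω) ⬝ᵥ (B *ᵥ Y ω))) μ := by
  simp_rw [dotProduct_mul_dotProduct]
  exact integrable_finsetSum _ fun a _ => integrable_finsetSum _ fun b _ =>
    integrable_mulVec_mul_mulVec_mul_of_indepFun A B hXY hX hY a b

lemma integral_dotProduct_mul_dotProduct_of_indepFun [Fintype m] [Fintype m'] [DecidableEq ι]
    {α β : ℝ} (hXY : IndepFun X Y μ)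
    (hX : ∀ r, MemLp (fun ω => X ω r) 2 μ) (hY : ∀ r, MemLp (fun ω => Y ω r) 2 μ)
    (hXcov : ∀ r s, ∫ ω, X ω r * X ω s ∂μ = if r = s then α else 0)
    (hYcov : ∀ r s, ∫ ω, Y ω r * Y ω s ∂μ = if r = s then β else 0) :
    ∫ ω, ((A *ᵥ X ω) ⬝ᵥ (A *ᵥ Y ω)) * ((B *ᵥ X ω) ⬝ᵥ (B *ᵥ Y ω)) ∂μ
      = α * β * trace ((A * Bᵀ) * (A * Bᵀ)ᵀ) := by
  have hint := integrable_mulVec_mul_mulVec_mul_of_indepFun A B hXY hX hY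
  have hterm : ∀ a b, ∫ ω, (A *ᵥ X ω) a * (B *ᵥ X ω) b * ((A *ᵥ Y ω) a * (B *ᵥ Y ω) b) ∂μ
      = α * (A * Bᵀ) a b * (β * (A * Bᵀ) a b) := fun a b => by
    rw [← integral_mulVec_mul_mulVec hX hXcov, ← integral_mulVec_mul_mulVec hY hYcov]
    exact (hXY.comp (measurable_mulVec_apply_mul_mulVec_apply A B a b)
      (measurable_mulVec_apply_mul_mulVec_apply A B a b)).integral_mul_eq_mul_integral
      ((memLp_mulVec_apply hX A a).integrable_mul (memLp_mulVec_apply hX B b)).1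
      ((memLp_mulVec_apply hY A a).integrable_mul (memLp_mulVec_apply hY B b)).1
  simp_rw [dotProduct_mul_dotProduct]
  rw [integral_finsetSum _ fun a _ => integrable_finsetSum _ fun b _ => hint a b]
  simp_rw [integral_finsetSum _ fun b _ => hint _ b, hterm, Matrix.trace, Matrix.diag,
    Matrix.mul_apply (M := A * Bᵀ), Matrix.transpose_apply, Finset.mul_sum]
  exact Finset.sum_congr rfl fun a _ => Finset.sum_congr rfl fun b _ => by ring

end Independent

end SecondMoments

section Deviation

variable {Ω ι κ : Type*} {w : κ → Ω → ι → ℝ}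

def deviation (w : κ → Ω → ι → ℝ) (S : Finset κ) (t : κ) (ω : Ω) : ι → ℝ :=
  w t ω - (#S : ℝ)⁻¹ • ∑ l ∈ S, w l ω

lemma deviation_eq_comp {S : Finset κ} {t : κ} (ht : t ∈ S) :
    deviation w S t = (fun v : S → ι → ℝ => v ⟨t, ht⟩ - (#S : ℝ)⁻¹ • ∑ l, v l) ∘
      fun ω (l : S) => w l ω := by
  funext ω
  simp only [deviation, Function.comp_apply, Finset.sum_coe_sort S (fun l => w l ω)]

lemma deviation_apply_eq_sum [DecidableEq κ] {S : Finset κ} {t : κ} (ht : t ∈ S) (ω : Ω)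
    (r : ι) :
    deviation w S t ω r = ∑ l ∈ S, ((if l = t then 1 else 0) - (#S : ℝ)⁻¹) * w l ω r := by
  simp only [deviation, Pi.sub_apply, Pi.smul_apply, Finset.sum_apply, smul_eq_mul, sub_mul,
    ite_mul, one_mul, zero_mul, Finset.sum_sub_distrib, Finset.sum_ite_eq', ht, if_true,
    Finset.mul_sum]

lemma sum_ite_sub_inv_card_sq [DecidableEq κ] {S : Finset κ} {t : κ} (ht : t ∈ S) :
    ∑ l ∈ S, ((if l = t then 1 else 0) - (#S : ℝ)⁻¹) ^ 2 = 1 - (#S : ℝ)⁻¹ := by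
  have hS : (#S : ℝ) ≠ 0 := Nat.cast_ne_zero.mpr (Finset.card_ne_zero_of_mem ht)
  simp only [sub_sq, ite_pow, one_pow, zero_pow two_ne_zero, mul_ite, mul_one, mul_zero,
    ite_mul, zero_mul, Finset.sum_add_distrib, Finset.sum_sub_distrib, Finset.sum_ite_eq', ht,
    if_true, Finset.sum_const, nsmul_eq_mul]
  field_simp
  ring

variable [MeasurableSpace Ω] {μ : Measure Ω}

lemma indepFun_deviation (hw : iIndepFun w μ) (hmeas : ∀ l, Measurable (w l))
    {S T : Finset κ} (hST : Disjoint S T) {t t' : κ} (ht : t ∈ S) (ht' : t' ∈ T) :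
    IndepFun (deviation w S t) (deviation w T t') μ := by
  rw [deviation_eq_comp ht, deviation_eq_comp ht']
  exact (hw.indepFun_finset S T hST hmeas).comp (by fun_prop) (by fun_prop)

lemma memLp_deviation_apply (hw : ∀ l r, MemLp (fun ω => w l ω r) 2 μ) (S : Finset κ) (t : κ)
    (r : ι) : MemLp (fun ω => deviation w S t ω r) 2 μ := by
  simp only [deviation, Pi.sub_apply, Pi.smul_apply, Finset.sum_apply, smul_eq_mul]
  exact (hw t r).sub ((memLp_finsetSum _ fun l _ => hw l r).const_mul _)

lemma integral_sum_mul_sum_of_orthonormal [DecidableEq ι] [DecidableEq κ]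
    (hw : ∀ l r, MemLp (fun ω => w l ω r) 2 μ)
    (hcov : ∀ l m r s, ∫ ω, w l ω r * w m ω s ∂μ = if l = m ∧ r = s then 1 else 0)
    (S : Finset κ) (a b : κ → ℝ) (r s : ι) :
    ∫ ω, (∑ l ∈ S, a l * w l ω r) * (∑ m ∈ S, b m * w m ω s) ∂μ
      = if r = s then ∑ l ∈ S, a l * b l else 0 := by
  rw [integral_sum_mul_sum_of_memLp (fun l _ => (hw l r).const_mul _)
    (fun m _ => (hw m s).const_mul _)]
  have hterm : ∀ l m, ∫ ω, a l * w l ω r * (b m * w m ω s) ∂μ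
      = a l * b m * if l = m ∧ r = s then 1 else 0 := fun l m => by
    rw [← hcov, ← integral_const_mul]
    exact integral_congr_ae (ae_of_all _ fun ω => by ring)
  simp_rw [hterm]
  split_ifs with hrs
  · simp only [hrs, and_true, mul_ite, mul_one, mul_zero, Finset.sum_ite_eq]
    exact Finset.sum_congr rfl fun l hl => if_pos hl
  · simp [hrs]

lemma integral_deviation_mul_deviation [DecidableEq ι] [DecidableEq κ]
    (hw : ∀ l r, MemLp (fun ω => w l ω r) 2 μ)
    (hcov : ∀ l m r s, ∫ ω, w l ω r * w m ω s ∂μ = if l = m ∧ r = s then 1 else 0)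
    {S : Finset κ} {t : κ} (ht : t ∈ S) (r s : ι) :
    ∫ ω, deviation w S t ω r * deviation w S t ω s ∂μ = if r = s then 1 - (#S : ℝ)⁻¹ else 0 := by
  simp_rw [deviation_apply_eq_sum ht, integral_sum_mul_sum_of_orthonormal hw hcov, ← pow_two,
    sum_ite_sub_inv_card_sq ht]

end Deviation

lemma sum_card_Ico_one_mul_two (n : ℕ) : (∑ j ∈ Icc 1 n, #(Ico 1 j)) * 2 = n * (n - 1) := by
  rw [← Finset.Ico_add_one_right_eq_Icc, Finset.sum_Ico_eq_sum_range]
  simp only [Nat.card_Ico, add_tsub_cancel_right, add_tsub_cancel_left]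
  exact Finset.sum_range_id_mul_two n

namespace ECDMModel

variable {Ω : Type} [MeasurableSpace Ω] (M : ECDMModel Ω)

lemma two_le_n1 : 2 ≤ M.n1 := by
  have := M.hn
  unfold n1
  omega

lemma two_le_n2 : 2 ≤ M.n2 := by
  have := M.hn
  unfold n2 n1
  omega

lemma two_le_nsub (g : ℕ) : 2 ≤ M.nsub g := by
  unfold nsub
  split_ifs
  exacts [M.two_le_n1, M.two_le_n2]

lemma disjoint_V1_V2 (k : ℕ) : Disjoint (M.V1 k) (M.V2 k) := by
  rw [Finset.disjoint_left]
  intro l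
  unfold V1 V2 n2
  split_ifs <;> simp only [Finset.mem_Icc, Finset.mem_union] <;> omega

lemma card_V1 (k : ℕ) : #(M.V1 k) = M.n1 := by
  have := M.hn
  unfold V1
  split_ifs with h
  · rw [Nat.card_Icc]
    omega
  · rw [Finset.card_union_of_disjoint, Nat.card_Icc, Nat.card_Icc]
    · unfold n2 n1 at h ⊢
      omega
    · rw [Finset.disjoint_left]
      intro l
      simp only [Finset.mem_Icc]
      omega

lemma card_V2 {k : ℕ} (hk : k / 2 ≤ M.n) : #(M.V2 k) = M.n2 := by
  unfold V2
  split_ifs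
  · rw [Nat.card_Icc]
    omega
  · rw [Finset.card_union_of_disjoint, Nat.card_Icc, Nat.card_Icc]
    · unfold n2
      omega
    · rw [Finset.disjoint_left]
      intro l
      simp only [Finset.mem_Icc]
      omega

lemma mem_V1 {i j : ℕ} (hi : 1 ≤ i) (hij : i < j) (hj : j ≤ M.n) : i ∈ M.V1 (i + j) := by
  have := M.two_le_n1
  unfold V1 n1
  split_ifs <;> simp only [Finset.mem_Icc, Finset.mem_union] <;> omega

lemma mem_V2 {i j : ℕ} (hi : 1 ≤ i) (hij : i < j) (hj : j ≤ M.n) : j ∈ M.V2 (i + j) := by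
  have := M.two_le_n2
  unfold V2 n2 n1
  split_ifs <;> simp only [Finset.mem_Icc, Finset.mem_union] <;> omega

lemma memLp_w (l : ℕ) (r : Fin M.q) : MemLp (fun ω => M.w l ω r) 2 M.P := by
  refine (memLp_two_iff_integrable_sq
    ((measurable_pi_apply r).comp (M.w_meas l)).aestronglyMeasurable).2 ?_
  -- a non-integrable function would have integral `0`, not `1`
  refine Integrable.of_integral_ne_zero ?_
  simp [sq, M.w_cov]

lemma integral_w_mul_w (l m : ℕ) (r s : Fin M.q) :
    ∫ ω, M.w l ω r * M.w m ω s ∂M.P = if l = m ∧ r = s then 1 else 0 := by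
  rcases eq_or_ne l m with rfl | hlm
  · simp [M.w_cov]
  · have hind : IndepFun (fun ω => M.w l ω r) (fun ω => M.w m ω s) M.P :=
      (M.w_indep.indepFun hlm).comp (measurable_pi_apply r) (measurable_pi_apply s)
    rw [← Pi.mul_def, hind.integral_mul_eq_mul_integral (M.memLp_w l r).1 (M.memLp_w m s).1,
      M.w_mean, M.w_mean]
    simp [hlm]

lemma x1_sub_xbar1 {g k : ℕ} (hcard : #(M.Vset g k) = M.nsub g) (t : ℕ) (ω : Ω) :
    M.x1 t ω - M.xbar1 g k ω = M.Γ₁ *ᵥ deviation M.w (M.Vset g k) t ω := by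
  have hg : (M.nsub g : ℝ) ≠ 0 := Nat.cast_ne_zero.mpr (by have := M.two_le_nsub g; omega)
  ext a
  simp only [x1, xbar1, deviation, Pi.sub_apply, Finset.sum_add_distrib, Finset.sum_const, hcard,
    nsmul_eq_mul, Matrix.mulVec_sub, Matrix.mulVec_smul, Matrix.mulVec_sum, Pi.smul_apply,
    smul_eq_mul, Finset.sum_apply]
  field_simp
  ring

lemma x2_sub_xbar2 {g k : ℕ} (hcard : #(M.Vset g k) = M.nsub g) (t : ℕ) (ω : Ω) :
    M.x2 t ω - M.xbar2 g k ω = M.Γ₂ *ᵥ deviation M.w (M.Vset g k) t ω := by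
  have hg : (M.nsub g : ℝ) ≠ 0 := Nat.cast_ne_zero.mpr (by have := M.two_le_nsub g; omega)
  ext a
  simp only [x2, xbar2, deviation, Pi.sub_apply, Finset.sum_add_distrib, Finset.sum_const, hcard,
    nsmul_eq_mul, Matrix.mulVec_sub, Matrix.mulVec_smul, Matrix.mulVec_sum, Pi.smul_apply,
    smul_eq_mul, Finset.sum_apply]
  field_simp
  ring

section Pair

variable {M} {i j : ℕ}

lemma indepFun_deviation_Vset (hi : 1 ≤ i) (hij : i < j) (hj : j ≤ M.n) :
    IndepFun (deviation M.w (M.Vset 1 (i + j)) i) (deviation M.w (M.Vset 2 (i + j)) j) M.P :=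
  indepFun_deviation M.w_indep M.w_meas (M.disjoint_V1_V2 _) (M.mem_V1 hi hij hj)
    (M.mem_V2 hi hij hj)

lemma card_Vset_one : #(M.Vset 1 (i + j)) = M.nsub 1 := M.card_V1 _

lemma card_Vset_two (hij : i < j) (hj : j ≤ M.n) : #(M.Vset 2 (i + j)) = M.nsub 2 :=
  M.card_V2 (by omega)

lemma indepFun_x1_sub_xbar1 (hi : 1 ≤ i) (hij : i < j) (hj : j ≤ M.n) :
    IndepFun (fun ω => M.x1 i ω - M.xbar1 1 (i + j) ω)
      (fun ω => M.x1 j ω - M.xbar1 2 (i + j) ω) M.P := by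
  simp_rw [M.x1_sub_xbar1 card_Vset_one, M.x1_sub_xbar1 (card_Vset_two hij hj)]
  exact (indepFun_deviation_Vset hi hij hj).comp (φ := (M.Γ₁ *ᵥ ·)) (ψ := (M.Γ₁ *ᵥ ·))
    (by fun_prop) (by fun_prop)

lemma indepFun_x2_sub_xbar2 (hi : 1 ≤ i) (hij : i < j) (hj : j ≤ M.n) :
    IndepFun (fun ω => M.x2 i ω - M.xbar2 1 (i + j) ω)
      (fun ω => M.x2 j ω - M.xbar2 2 (i + j) ω) M.P := by
  simp_rw [M.x2_sub_xbar2 card_Vset_one, M.x2_sub_xbar2 (card_Vset_two hij hj)]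
  exact (indepFun_deviation_Vset hi hij hj).comp (φ := (M.Γ₂ *ᵥ ·)) (ψ := (M.Γ₂ *ᵥ ·))
    (by fun_prop) (by fun_prop)

lemma Dhat_eq_deviation (hij : i < j) (hj : j ≤ M.n) : M.Dhat i j = fun ω =>
    ((M.Γ₁ *ᵥ deviation M.w (M.Vset 1 (i + j)) i ω) ⬝ᵥ
        (M.Γ₁ *ᵥ deviation M.w (M.Vset 2 (i + j)) j ω)) *
      ((M.Γ₂ *ᵥ deviation M.w (M.Vset 1 (i + j)) i ω) ⬝ᵥ
        (M.Γ₂ *ᵥ deviation M.w (M.Vset 2 (i + j)) j ω)) := by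
  funext ω
  change (M.x1 i ω - M.xbar1 1 (i + j) ω) ⬝ᵥ (M.x1 j ω - M.xbar1 2 (i + j) ω) *
    ((M.x2 i ω - M.xbar2 1 (i + j) ω) ⬝ᵥ (M.x2 j ω - M.xbar2 2 (i + j) ω)) = _
  rw [M.x1_sub_xbar1 card_Vset_one, M.x1_sub_xbar1 (card_Vset_two hij hj),
    M.x2_sub_xbar2 card_Vset_one, M.x2_sub_xbar2 (card_Vset_two hij hj)]

lemma integrable_Dhat (hi : 1 ≤ i) (hij : i < j) (hj : j ≤ M.n) :
    Integrable (M.Dhat i j) M.P := by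
  rw [Dhat_eq_deviation hij hj]
  exact integrable_dotProduct_mul_dotProduct_of_indepFun _ _ (indepFun_deviation_Vset hi hij hj)
    (memLp_deviation_apply M.memLp_w _ _) (memLp_deviation_apply M.memLp_w _ _)

lemma integral_Dhat (hi : 1 ≤ i) (hij : i < j) (hj : j ≤ M.n) : ∫ ω, M.Dhat i j ω ∂M.P =
    M.Delta * (((M.n1 : ℝ) - 1) * ((M.n2 : ℝ) - 1)) / ((M.n1 : ℝ) * (M.n2 : ℝ)) := by
  rw [Dhat_eq_deviation hij hj, integral_dotProduct_mul_dotProduct_of_indepFun _ _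
    (indepFun_deviation_Vset hi hij hj) (memLp_deviation_apply M.memLp_w _ _)
    (memLp_deviation_apply M.memLp_w _ _)
    (integral_deviation_mul_deviation M.memLp_w M.integral_w_mul_w (M.mem_V1 hi hij hj))
    (integral_deviation_mul_deviation M.memLp_w M.integral_w_mul_w (M.mem_V2 hi hij hj)),
    card_Vset_one, card_Vset_two hij hj]
  have h1 : (M.n1 : ℝ) ≠ 0 := by have := M.two_le_n1; positivity
  have h2 : (M.n2 : ℝ) ≠ 0 := by have := M.two_le_n2; positivity
  simp only [nsub, Delta, Sigs, if_true, OfNat.ofNat_ne_one, if_false]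
  field_simp

end Pair

lemma integral_sum_Dhat : ∫ ω, ∑ j ∈ Icc 1 M.n, ∑ i ∈ Ico 1 j, M.Dhat i j ω ∂M.P
    = (∑ j ∈ Icc 1 M.n, #(Ico 1 j) : ℕ) *
      (M.Delta * (((M.n1 : ℝ) - 1) * ((M.n2 : ℝ) - 1)) / ((M.n1 : ℝ) * (M.n2 : ℝ))) := by
  have hpair : ∀ j ∈ Icc 1 M.n, ∀ i ∈ Ico 1 j, 1 ≤ i ∧ i < j ∧ j ≤ M.n := fun j hj i hi => by
    simp only [Finset.mem_Icc, Finset.mem_Ico] at hj hi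
    omega
  have hint : ∀ j ∈ Icc 1 M.n, ∀ i ∈ Ico 1 j, Integrable (M.Dhat i j) M.P := fun j hj i hi =>
    integrable_Dhat (hpair j hj i hi).1 (hpair j hj i hi).2.1 (hpair j hj i hi).2.2
  rw [integral_finsetSum _ fun j hj => integrable_finsetSum _ (hint j hj), Nat.cast_sum,
    Finset.sum_mul]
  refine Finset.sum_congr rfl fun j hj => ?_
  rw [integral_finsetSum _ (hint j hj), Finset.sum_congr rfl fun i hi =>
      integral_Dhat (hpair j hj i hi).1 (hpair j hj i hi).2.1 (hpair j hj i hi).2.2,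
    Finset.sum_const, nsmul_eq_mul]

lemma integral_That : ∫ ω, M.That ω ∂M.P = M.Delta := by
  have hcount : ((∑ j ∈ Icc 1 M.n, #(Ico 1 j) : ℕ) : ℝ) * 2 = M.n * (M.n - 1) := by
    have h := congrArg (Nat.cast (R := ℝ)) (sum_card_Ico_one_mul_two M.n)
    push_cast [Nat.cast_sub (show 1 ≤ M.n by have := M.hn; omega)] at h
    exact_mod_cast h
  have hn : (4 : ℝ) ≤ M.n := by exact_mod_cast M.hn
  have h1 : (2 : ℝ) ≤ M.n1 := by exact_mod_cast M.two_le_n1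
  have h2 : (2 : ℝ) ≤ M.n2 := by exact_mod_cast M.two_le_n2
  have : (M.n : ℝ) - 1 ≠ 0 := by linarith
  have : (M.n1 : ℝ) - 1 ≠ 0 := by linarith
  have : (M.n2 : ℝ) - 1 ≠ 0 := by linarith
  unfold That
  rw [integral_const_mul, integral_sum_Dhat, u]
  field_simp
  linear_combination M.Delta * hcount

end ECDMModel

/-- For all `1 ≤ i < j ≤ n`: (i) `x_{1i} − x̄_{1(1)(i+j)}` and
`x_{1j} − x̄_{1(2)(i+j)}` are independent; (ii) `x_{2i} − x̄_{2(1)(i+j)}` and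
`x_{2j} − x̄_{2(2)(i+j)}` are independent; (iii) `E(Δ̂_{ij}) = Δ (n₍₁₎−1)(n₍₂₎−1)/(n₍₁₎n₍₂₎)`;
consequently `E(T̂_n) = Δ`. -/
theorem ecdm_estimator_unbiased {Ω : Type} [MeasurableSpace Ω] (M : ECDMModel Ω) :
    (∀ i j : ℕ, 1 ≤ i → i < j → j ≤ M.n →
      IndepFun (fun ω a => M.x1 i ω a - M.xbar1 1 (i + j) ω a)
        (fun ω a => M.x1 j ω a - M.xbar1 2 (i + j) ω a) M.P ∧
      IndepFun (fun ω a => M.x2 i ω a - M.xbar2 1 (i + j) ω a)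
        (fun ω a => M.x2 j ω a - M.xbar2 2 (i + j) ω a) M.P ∧
      ∫ ω, M.Dhat i j ω ∂M.P =
        M.Delta * (((M.n1 : ℝ) - 1) * ((M.n2 : ℝ) - 1)) / ((M.n1 : ℝ) * (M.n2 : ℝ))) ∧
    ∫ ω, M.That ω ∂M.P = M.Delta :=
  ⟨fun _ _ hi hij hj => ⟨ECDMModel.indepFun_x1_sub_xbar1 hi hij hj,
    ECDMModel.indepFun_x2_sub_xbar2 hi hij hj, ECDMModel.integral_Dhat hi hij hj⟩,
    M.integral_That⟩
end
end

section
/- Let Σ be a p×p real positive semidefinite matrix partitioned as Σ = [[Σ₁, Σ*],[Σ*ᵀ, Σ₂]] with Σ₁ of size p₁×p₁, Σ₂ of size p₂×p₂, and Σ* of size p₁×p₂ (p = p₁+p₂). Then: (i) tr((Σ* Σ*ᵀ)²) ≤ tr(Σ₁ Σ* Σ₂ Σ*ᵀ); (ii) tr(Σ* Σ*ᵀ) ≤ √(tr(Σ₁²) tr(Σ₂²)); (iii) tr(Σ₁ Σ* Σ₂ Σ*ᵀ) ≤ √(tr(Σ₁⁴) tr(Σ₂⁴)) ≤ tr(Σ₁²)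 tr(Σ₂²). -/
/-!
Since `Σ` is positive semidefinite it is a Gram matrix: `Σ₁ = Γ₁Γ₁ᵀ`, `Σ* = Γ₁Γ₂ᵀ`, `Σ₂ = Γ₂Γ₂ᵀ`.
By cyclicity of the trace every quantity in the statement is a trace of a word in the symmetric
matrices `N = Γ₁ᵀΓ₁` and `M = Γ₂ᵀΓ₂`: `tr(Σ*Σ*ᵀ) = tr(NM)`, `tr((Σ*Σ*ᵀ)²) = tr((NM)²)`,
`tr(Σ₁Σ*Σ₂Σ*ᵀ) = tr(N²M²)` and `tr(Σᵢᵏ) = tr(Nᵏ)`, `tr(Mᵏ)`. All inequalities are then instances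
of the Cauchy–Schwarz inequality for the Frobenius inner product `⟨A, B⟩ = tr(AᵀB)`: applied to
`X` and `Xᵀ` it gives `tr(X²) ≤ tr(XᵀX)`, which for `X = NM` is (i); applied to `N, M` and to
`N², M²` it gives (ii) and the first half of (iii); applied to the columns of `N` it gives
`(N²)ᵢⱼ² ≤ (N²)ᵢᵢ(N²)ⱼⱼ`, hence `tr(N⁴) ≤ tr(N²)²` and the second half of (iii).
-/

open Matrix

namespace Matrix

variable {k m n : Type*} [Fintype k] [Fintype m] [Fintype n]

open MatrixOrder in
lemma PosSemidef.exists_fromBlocks_eq_gram {A : Matrix m m ℝ} {B : Matrix m n ℝ}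
    {D : Matrix n n ℝ} (h : (fromBlocks A B Bᵀ D).PosSemidef) :
    ∃ (G₁ : Matrix m (m ⊕ n) ℝ) (G₂ : Matrix n (m ⊕ n) ℝ),
      A = G₁ * G₁ᵀ ∧ B = G₁ * G₂ᵀ ∧ D = G₂ * G₂ᵀ := by
  classical
  obtain ⟨Γ, hΓ⟩ := CStarAlgebra.nonneg_iff_eq_mul_star_self.mp h.nonneg
  rw [star_eq_conjTranspose, conjTranspose_eq_transpose_of_trivial, ← fromRows_toRows Γ,
    transpose_fromRows, fromRows_mul_fromCols] at hΓ
  obtain ⟨hA, hB, -, hD⟩ := fromBlocks_inj.mp hΓ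
  exact ⟨Γ.toRows₁, Γ.toRows₂, hA, hB, hD⟩

section CommSemiring

variable {R : Type*} [CommSemiring R]

omit [Fintype k] [Fintype n] in
lemma isSymm_transpose_mul_self' (A : Matrix m n R) : (Aᵀ * A).IsSymm := by
  rw [IsSymm, transpose_mul, transpose_transpose]

lemma mul_pow_succ_eq_mul_pow_mul [DecidableEq k] [DecidableEq m] (A : Matrix m k R)
    (B : Matrix k m R) (j : ℕ) : (A * B) ^ (j + 1) = A * (B * A) ^ j * B := by
  induction j with
  | zero => simp
  | succ j ih => rw [pow_succ, ih, pow_succ]; simp only [Matrix.mul_assoc]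

lemma trace_mul_pow_comm [DecidableEq k] [DecidableEq m] (A : Matrix m k R) (B : Matrix k m R)
    {j : ℕ} (hj : j ≠ 0) : trace ((A * B) ^ j) = trace ((B * A) ^ j) := by
  obtain ⟨j, rfl⟩ := Nat.exists_eq_add_one_of_ne_zero hj
  rw [mul_pow_succ_eq_mul_pow_mul, trace_mul_cycle, pow_succ']

lemma trace_crossGram_mul_transpose (G₁ : Matrix m k R) (G₂ : Matrix n k R) :
    trace (G₁ * G₂ᵀ * (G₁ * G₂ᵀ)ᵀ) = trace (G₁ᵀ * G₁ * (G₂ᵀ * G₂)) := by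
  rw [transpose_mul, transpose_transpose]
  simp only [← Matrix.mul_assoc]
  rw [trace_mul_comm]
  simp only [← Matrix.mul_assoc]

lemma trace_sq_crossGram_mul_transpose [DecidableEq k] [DecidableEq m]
    (G₁ : Matrix m k R) (G₂ : Matrix n k R) :
    trace ((G₁ * G₂ᵀ * (G₁ * G₂ᵀ)ᵀ) ^ 2) = trace ((G₁ᵀ * G₁ * (G₂ᵀ * G₂)) ^ 2) := by
  rw [transpose_mul, transpose_transpose, sq, sq]
  simp only [← Matrix.mul_assoc]
  rw [trace_mul_comm]
  simp only [← Matrix.mul_assoc]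

lemma trace_gram_mul_crossGram_mul_gram_mul_transpose [DecidableEq k] (G₁ : Matrix m k R)
    (G₂ : Matrix n k R) :
    trace (G₁ * G₁ᵀ * (G₁ * G₂ᵀ) * (G₂ * G₂ᵀ) * (G₁ * G₂ᵀ)ᵀ) =
      trace ((G₁ᵀ * G₁) ^ 2 * (G₂ᵀ * G₂) ^ 2) := by
  rw [transpose_mul, transpose_transpose, sq, sq]
  simp only [← Matrix.mul_assoc]
  rw [trace_mul_comm]
  simp only [← Matrix.mul_assoc]

end CommSemiring

lemma trace_transpose_mul_self_nonneg (A : Matrix m n ℝ) : 0 ≤ trace (Aᵀ * A) :=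
  (posSemidef_conjTranspose_mul_self A).trace_nonneg

lemma trace_transpose_mul_le (A B : Matrix m n ℝ) :
    trace (Aᵀ * B) ≤ √(trace (Aᵀ * A) * trace (Bᵀ * B)) := by
  rw [Real.sqrt_mul (trace_transpose_mul_self_nonneg A)]
  simpa only [← vec_dotProduct_vec, dotProduct, sq] using
    Real.sum_mul_le_sqrt_mul_sqrt Finset.univ (vec A) (vec B)

lemma trace_sq_le_trace_transpose_mul_self [DecidableEq n] (X : Matrix n n ℝ) :
    trace (X ^ 2) ≤ trace (Xᵀ * X) :=
  calc trace (X ^ 2) = trace (Xᵀᵀ * X) := by rw [transpose_transpose, sq]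
    _ ≤ √(trace (Xᵀᵀ * Xᵀ) * trace (Xᵀ * X)) := trace_transpose_mul_le _ _
    _ = trace (Xᵀ * X) := by
      rw [transpose_transpose, trace_mul_comm,
        Real.sqrt_mul_self (trace_transpose_mul_self_nonneg X)]

lemma trace_sq_transpose_mul_self_le [DecidableEq n] (A : Matrix m n ℝ) :
    trace ((Aᵀ * A) ^ 2) ≤ trace (Aᵀ * A) ^ 2 := by
  set P := Aᵀ * A with hP
  have hPsymm : P.IsSymm := isSymm_transpose_mul_self' A
  have entry_sq_le : ∀ i j, P i j ^ 2 ≤ P i i * P j j := fun i j => by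
    simpa only [hP, mul_apply, transpose_apply, sq] using
      Finset.sum_mul_sq_le_sq_mul_sq Finset.univ (fun l => A l i) (fun l => A l j)
  calc trace (P ^ 2) = ∑ i, ∑ j, P i j ^ 2 := by
        simp only [trace, diag, sq, mul_apply]
        refine Finset.sum_congr rfl fun i _ => Finset.sum_congr rfl fun j _ => ?_
        rw [hPsymm.apply]
    _ ≤ ∑ i, ∑ j, P i i * P j j := by gcongr with i _ j _; exact entry_sq_le i j
    _ = trace P ^ 2 := by rw [trace, sq, Finset.sum_mul_sum]; rfl

namespace IsSymm

variable [DecidableEq n] {N M : Matrix n n ℝ}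

lemma trace_sq_nonneg (hN : N.IsSymm) : 0 ≤ trace (N ^ 2) := by
  simpa only [hN.eq, ← sq] using trace_transpose_mul_self_nonneg N

lemma trace_mul_le (hN : N.IsSymm) (hM : M.IsSymm) :
    trace (N * M) ≤ √(trace (N ^ 2) * trace (M ^ 2)) := by
  simpa only [hN.eq, hM.eq, ← sq] using trace_transpose_mul_le N M

lemma trace_mul_sq_le (hN : N.IsSymm) (hM : M.IsSymm) :
    trace ((N * M) ^ 2) ≤ trace (N ^ 2 * M ^ 2) :=
  calc trace ((N * M) ^ 2) ≤ trace ((N * M)ᵀ * (N * M)) :=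
        trace_sq_le_trace_transpose_mul_self _
    _ = trace (N ^ 2 * M ^ 2) := by
      rw [transpose_mul, hN.eq, hM.eq, Matrix.mul_assoc, ← Matrix.mul_assoc N, ← sq,
        trace_mul_comm, Matrix.mul_assoc, ← sq]

lemma trace_pow_four_le (hN : N.IsSymm) : trace (N ^ 4) ≤ trace (N ^ 2) ^ 2 := by
  have h := trace_sq_transpose_mul_self_le N
  rwa [hN.eq, ← sq, ← pow_mul] at h

lemma sqrt_trace_pow_four_mul_le (hN : N.IsSymm) (hM : M.IsSymm) :
    √(trace (N ^ 4) * trace (M ^ 4)) ≤ trace (N ^ 2) * trace (M ^ 2) := by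
  have hM4 : 0 ≤ trace (M ^ 4) := by
    simpa only [← pow_mul] using (hM.pow 2).trace_sq_nonneg
  rw [Real.sqrt_le_left (mul_nonneg hN.trace_sq_nonneg hM.trace_sq_nonneg), mul_pow]
  exact mul_le_mul hN.trace_pow_four_le hM.trace_pow_four_le hM4 (sq_nonneg _)

end IsSymm

end Matrix

/-- if `Σ = [[S1, Σ*],[Σ*ᵀ, S2]]` is real positive semidefinite, then
(i) `tr((Σ*Σ*ᵀ)²) ≤ tr(S1Σ*S2Σ*ᵀ)`; (ii) `tr(Σ*Σ*ᵀ) ≤ √(tr(S1²)tr(S2²))`;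
(iii) `tr(S1Σ*S2Σ*ᵀ) ≤ √(tr(S1⁴)tr(S2⁴)) ≤ tr(S1²)tr(S2²)`. -/
theorem block_trace_inequalities (p₁ p₂ : ℕ)
    (S1 : Matrix (Fin p₁) (Fin p₁) ℝ) (S2 : Matrix (Fin p₂) (Fin p₂) ℝ)
    (Ss : Matrix (Fin p₁) (Fin p₂) ℝ)
    (hS : (Matrix.fromBlocks S1 Ss Ssᵀ S2).PosSemidef) :
    Matrix.trace ((Ss * Ssᵀ) ^ 2) ≤ Matrix.trace (S1 * Ss * S2 * Ssᵀ) ∧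
    Matrix.trace (Ss * Ssᵀ) ≤
      Real.sqrt (Matrix.trace (S1 ^ 2) * Matrix.trace (S2 ^ 2)) ∧
    Matrix.trace (S1 * Ss * S2 * Ssᵀ) ≤
      Real.sqrt (Matrix.trace (S1 ^ 4) * Matrix.trace (S2 ^ 4)) ∧
    Real.sqrt (Matrix.trace (S1 ^ 4) * Matrix.trace (S2 ^ 4)) ≤
      Matrix.trace (S1 ^ 2) * Matrix.trace (S2 ^ 2) := by
  obtain ⟨G₁, G₂, rfl, rfl, rfl⟩ := hS.exists_fromBlocks_eq_gram
  rw [trace_sq_crossGram_mul_transpose, trace_gram_mul_crossGram_mul_gram_mul_transpose,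
    trace_crossGram_mul_transpose,
    trace_mul_pow_comm G₁ G₁ᵀ two_ne_zero, trace_mul_pow_comm G₁ G₁ᵀ four_ne_zero,
    trace_mul_pow_comm G₂ G₂ᵀ two_ne_zero, trace_mul_pow_comm G₂ G₂ᵀ four_ne_zero]
  have hN := isSymm_transpose_mul_self' G₁
  have hM := isSymm_transpose_mul_self' G₂
  refine ⟨hN.trace_mul_sq_le hM, hN.trace_mul_le hM, ?_, hN.sqrt_trace_pow_four_mul_le hM⟩
  simpa only [← pow_mul] using (hN.pow 2).trace_mul_le (hM.pow 2)
end
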